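/- Let (Λ,η) be a special isothermic surface in S^n of type d ∈ ℕ with respect to a polynomial conserved quantity p(t), and let Λ̂ be a complementary surface of (Λ,η) with respect to p(t). Then (Λ̂,η̂) is a special isothermic surface of type d with respect to a polynomial conserved quantity p̂(t) satisfying p̂(0) = p(0) and (p̂(t),p̂(t)) = (p(t),p(t)) as polynomials in t. -/

import Mathlib

noncomputable section

open Finset

/-- Minkowski space `ℝ^{n+1,1}`, modelled on `Fin (n+2) → ℝ`. -/
abbrev MV (n : ℕ) : Type := EuclideanSpace ℝ (Fin (n + 2))

/-- The Minkowski inner product of signature `(n+1,1)`. -/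
def mink (n : ℕ) (x y : MV n) : ℝ :=
  ∑ i : Fin (n + 1), x i.castSucc * y i.castSucc
    - x (Fin.last (n + 1)) * y (Fin.last (n + 1))

/-- The light cone `L ⊂ ℝ^{n+1,1}`. -/
def LightCone (n : ℕ) : Set (MV n) := {v | v ≠ 0 ∧ mink n v v = 0}

/-- The skew endomorphism `u ∧ v`, acting by `(u ∧ v) w = (u,w)v − (v,w)u`. -/
def wedge (n : ℕ) (u v w : MV n) : MV n :=
  mink n u w • v - mink n v w • u

/-- The surface domain: a two-dimensional coordinate chart. -/
abbrev Surf : Type := ℝ × ℝ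

/-- the coordinate direction ∂/∂u -/
def du : Surf := (1, 0)

/-- the coordinate direction ∂/∂v -/
def dv : Surf := (0, 1)

/-- partial derivative of a section in a coordinate direction -/
def pd {n : ℕ} (e : Surf) (f : Surf → MV n) (x : Surf) : MV n :=
  fderiv ℝ f x e

lemma mink_add_left (n : ℕ) (a b c : MV n) :
    mink n (a + b) c = mink n a c + mink n b c := by
  simp [mink, PiLp.add_apply, add_mul, Finset.sum_add_distrib]; ring

lemma mink_smul_left (n : ℕ) (r : ℝ) (a c : MV n) :
    mink n (r • a) c = r * mink n a c := by
  simp [mink, PiLp.smul_apply, smul_eq_mul, mul_sub, Finset.mul_sum, mul_assoc]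

lemma mink_zero_left (n : ℕ) (c : MV n) : mink n 0 c = 0 := by
  simp [mink]

/-- An isothermic surface `(Λ,η)` in `S^n = P(L)`, given by a nowhere-zero null
lift `F` of the immersion `Λ` together with the 1-form
`η = F ∧ W₁ du + F ∧ W₂ dv` with values in `Λ ∧ Λ^⊥`. -/
structure IsothermicSurface (n : ℕ) : Type where
  F : Surf → MV n
  W₁ : Surf → MV n
  W₂ : Surf → MV n
  smooth_F : ContDiff ℝ (⊤ : ℕ∞) F
  smooth_W₁ : ContDiff ℝ (⊤ : ℕ∞) W₁
  smooth_W₂ : ContDiff ℝ (⊤ : ℕ∞) W₂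
  F_ne : ∀ x, F x ≠ 0
  F_null : ∀ x, mink n (F x) (F x) = 0
  immersed : ∀ x, LinearIndependent ℝ ![F x, pd du F x, pd dv F x]
  W₁_perp : ∀ x, mink n (F x) (W₁ x) = 0
  W₂_perp : ∀ x, mink n (F x) (W₂ x) = 0
  eta_ne : ∃ x z, wedge n (F x) (W₁ x) z ≠ 0 ∨ wedge n (F x) (W₂ x) z ≠ 0
  eta_closed : ∀ x z,
    fderiv ℝ (fun y => wedge n (F y) (W₂ y) z) x du
      = fderiv ℝ (fun y => wedge n (F y) (W₁ y) z) x dv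

/-- `s` is a parallel section for the flat connection `∇^t = d + tη`. -/
def ParallelSection (n : ℕ) (S : IsothermicSurface n) (t : ℝ)
    (s : Surf → MV n) : Prop :=
  ∀ x, fderiv ℝ s x du + t • wedge n (S.F x) (S.W₁ x) (s x) = 0
     ∧ fderiv ℝ s x dv + t • wedge n (S.F x) (S.W₂ x) (s x) = 0

/-- A polynomial conserved quantity of degree `d` of the isothermic surface
`(Λ,η)`: a polynomial `p(t) = Σ_{k=0}^d p_k t^k` of (smooth) sections, of exact
degree `d`, with `∇^t p(t) = 0` for all `t`. -/
structure PolyConservedQuantity (n : ℕ) (S : IsothermicSurface n) (d : ℕ) : Type where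
  coeff : ℕ → Surf → MV n
  smooth : ∀ k, ContDiff ℝ (⊤ : ℕ∞) (coeff k)
  coeff_eq_zero : ∀ k, d < k → coeff k = 0
  top_ne : coeff d ≠ 0
  conserved : ∀ t : ℝ, ParallelSection n S t
    (fun x => ∑ k ∈ Finset.range (d + 1), t ^ k • coeff k x)

/-- evaluation `p(t)` of a polynomial conserved quantity -/
def pcEval {n : ℕ} {S : IsothermicSurface n} {d : ℕ}
    (p : PolyConservedQuantity n S d) (t : ℝ) (x : Surf) : MV n :=
  ∑ k ∈ Finset.range (d + 1), t ^ k • p.coeff k x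

/-- `(Λ,η)` is a special isothermic surface of type `d`. -/
def SpecialOfType (n : ℕ) (S : IsothermicSurface n) (d : ℕ) : Prop :=
  Nonempty (PolyConservedQuantity n S d)

/-- `p₀ ∈ ⟨w⟩`: the polynomial conserved quantity exhibits `(Λ,η)` as special
isothermic in the space-form `E(w)`. -/
def InSpaceForm {n : ℕ} {S : IsothermicSurface n} {d : ℕ}
    (p : PolyConservedQuantity n S d) (w : MV n) : Prop :=
  ∃ c : ℝ, ∀ x, p.coeff 0 x = c • w

/-- fullness: the image of `Λ` lies in no proper subsphere -/
def Full (n : ℕ) (S : IsothermicSurface n) : Prop :=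
  ¬ ∃ p : MV n, p ≠ 0 ∧ ∀ x, mink n p (S.F x) = 0
/-- A Darboux transform `Λ̂` of `(Λ,η)` with parameter `m`, given by a
`∇^m`-parallel null lift `G` spanning an immersed surface with `Λ̂ ∩ Λ = 0`. -/
structure DarbouxTransform (n : ℕ) (S : IsothermicSurface n) (m : ℝ) : Type where
  G : Surf → MV n
  smooth_G : ContDiff ℝ (⊤ : ℕ∞) G
  G_ne : ∀ x, G x ≠ 0
  G_null : ∀ x, mink n (G x) (G x) = 0
  immersed : ∀ x, LinearIndependent ℝ ![G x, pd du G x, pd dv G x]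
  disjoint : ∀ x, G x ∉ Submodule.span ℝ {S.F x}
  parallel : ParallelSection n S m G

/-- The gauge transformation `Γ_{⟨F⟩}^{⟨G⟩}(c)`: acts as `c` on `⟨G⟩`, as `1` on
`(⟨F⟩ ⊕ ⟨G⟩)^⊥` and as `c⁻¹` on `⟨F⟩`. -/
def gaugeG (n : ℕ) (F G : MV n) (c : ℝ) (z : MV n) : MV n :=
  ((mink n G z / mink n F G) / c) • F
    + (c * (mink n F z / mink n F G)) • G
    + (z - (mink n G z / mink n F G) • F - (mink n F z / mink n F G) • G)

/-- `Γ_Λ^{Λ̂}(1 − t/m) · (d + tη) = d + tη̂` for all `t ≠ m`: the gauge relation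
between the pencils of flat connections of an isothermic surface `S` and of (an
isothermic structure `T` on) its Darboux transform with parameter `m`. -/
def GaugeRel (n : ℕ) (S T : IsothermicSurface n) (m : ℝ) : Prop :=
  ∀ t : ℝ, t ≠ m → ∀ s : Surf → MV n, ContDiff ℝ (⊤ : ℕ∞) s → ∀ x : Surf,
    (fderiv ℝ (fun y => gaugeG n (S.F y) (T.F y) (1 - t / m) (s y)) x du
        + t • wedge n (T.F x) (T.W₁ x) (gaugeG n (S.F x) (T.F x) (1 - t / m) (s x))
      = gaugeG n (S.F x) (T.F x) (1 - t / m)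
          (fderiv ℝ s x du + t • wedge n (S.F x) (S.W₁ x) (s x)))
    ∧ (fderiv ℝ (fun y => gaugeG n (S.F y) (T.F y) (1 - t / m) (s y)) x dv
        + t • wedge n (T.F x) (T.W₂ x) (gaugeG n (S.F x) (T.F x) (1 - t / m) (s x))
      = gaugeG n (S.F x) (T.F x) (1 - t / m)
          (fderiv ℝ s x dv + t • wedge n (S.F x) (S.W₂ x) (s x)))

/-- `Λ̂ = ⟨p(m)⟩` with `(p(m),p(m)) = 0`: the Darboux transform `D` is a
complementary surface of `(Λ,η)` with respect to `p(t)`. -/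
def IsComplementary (n : ℕ) {S : IsothermicSurface n} {d : ℕ}
    (p : PolyConservedQuantity n S d) {m : ℝ} (D : DarbouxTransform n S m) : Prop :=
  (∀ x, mink n (pcEval p m x) (pcEval p m x) = 0) ∧
  (∀ x, Submodule.span ℝ {D.G x} = Submodule.span ℝ {pcEval p m x})

/-- `m` is a repeated root of the (constant-coefficient) polynomial `(p(t),p(t))`. -/
def IsRepeatedRootAt {n : ℕ} {S : IsothermicSurface n} {d : ℕ}
    (p : PolyConservedQuantity n S d) (m : ℝ) : Prop :=
  ∀ x, mink n (pcEval p m x) (pcEval p m x) = 0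
    ∧ deriv (fun t : ℝ => mink n (pcEval p t x) (pcEval p t x)) m = 0
/-- metric coefficient `g₁₁ = (F_u,F_u)` of the induced metric -/
def gUU (n : ℕ) (F : Surf → MV n) (x : Surf) : ℝ := mink n (pd du F x) (pd du F x)

/-- metric coefficient `g₁₂ = (F_u,F_v)` -/
def gUV (n : ℕ) (F : Surf → MV n) (x : Surf) : ℝ := mink n (pd du F x) (pd dv F x)

/-- metric coefficient `g₂₂ = (F_v,F_v)` -/
def gVV (n : ℕ) (F : Surf → MV n) (x : Surf) : ℝ := mink n (pd dv F x) (pd dv F x)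

/-- `(𝐇, N)`, the inner product of the mean curvature vector of `F` (in a
space-form `E(w)`) with a normal field `N`: half the trace with respect to the
induced metric of the `N`-component of the second fundamental form. -/
def meanCurv (n : ℕ) (F N : Surf → MV n) (x : Surf) : ℝ :=
  (gVV n F x * mink n (pd du (pd du F) x) (N x)
    - 2 * gUV n F x * mink n (pd du (pd dv F) x) (N x)
    + gUU n F x * mink n (pd dv (pd dv F) x) (N x))
  / (2 * (gUU n F x * gVV n F x - gUV n F x ^ 2))

/-- `N` is a unit normal field of the lift `F : Σ → E(w)`. -/
def IsUnitNormal (n : ℕ) (F N : Surf → MV n) (w : MV n) : Prop :=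
  (∀ x, mink n (N x) (N x) = 1) ∧ (∀ x, mink n (N x) w = 0)
    ∧ (∀ x, mink n (N x) (F x) = 0)
    ∧ (∀ x, mink n (N x) (pd du F x) = 0) ∧ (∀ x, mink n (N x) (pd dv F x) = 0)

/-- `N` is parallel for the normal connection of `F : Σ → E(w)`: the derivative
of `N` has no component in the normal bundle of `F` in `E(w)`. -/
def ParallelNormal (n : ℕ) (F N : Surf → MV n) (w : MV n) : Prop :=
  ∀ x e, fderiv ℝ N x e ∈ Submodule.span ℝ {F x, pd du F x, pd dv F x, w}

/-- the chart coordinates `(u,v)` are conformal curvature line coordinates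
corresponding to `η`, with conformal factor `e^{2θ}`:
`I = e^{2θ}(du² + dv²)` and `η = e^{−2θ} F ∧ (−F_u du + F_v dv)`. -/
def ConformalCoords (n : ℕ) (S : IsothermicSurface n) (θ : Surf → ℝ) : Prop :=
  ContDiff ℝ (⊤ : ℕ∞) θ
  ∧ (∀ x, mink n (pd du S.F x) (pd du S.F x) = Real.exp (2 * θ x))
  ∧ (∀ x, mink n (pd dv S.F x) (pd dv S.F x) = Real.exp (2 * θ x))
  ∧ (∀ x, mink n (pd du S.F x) (pd dv S.F x) = 0)
  ∧ (∀ x z, wedge n (S.F x) (S.W₁ x) z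
      = Real.exp (-(2 * θ x)) • wedge n (S.F x) (-pd du S.F x) z)
  ∧ (∀ x z, wedge n (S.F x) (S.W₂ x) z
      = Real.exp (-(2 * θ x)) • wedge n (S.F x) (pd dv S.F x) z)

/-- the second fundamental form of the lift `F` in `E(w)` with respect to the
unit normal `N` is `II = e^{2θ}(k₁ du² + k₂ dv²)`. -/
def PrincipalCurvatures (n : ℕ) (S : IsothermicSurface n) (N : Surf → MV n)
    (θ k₁ k₂ : Surf → ℝ) : Prop :=
  (∀ x, mink n (pd du (pd du S.F) x) (N x) = Real.exp (2 * θ x) * k₁ x)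
  ∧ (∀ x, mink n (pd du (pd dv S.F) x) (N x) = 0)
  ∧ (∀ x, mink n (pd dv (pd dv S.F) x) (N x) = Real.exp (2 * θ x) * k₂ x)

/-- partial derivative of a real function on the surface -/
def pdR (e : Surf) (f : Surf → ℝ) (x : Surf) : ℝ := fderiv ℝ f x e
/-- `(Λ^c, η^c)` is the Christoffel transform of `(Λ,η)` with respect to the
pair `(v∞, v₀)`, witnessed by the stereoprojections `f`, `f^c` into
`ℝ^n = ⟨v₀,v∞⟩^⊥`:  `F = exp(f ∧ v∞)v₀`, `F^c = exp(f^c ∧ v₀)v∞`,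
`η = Ad(exp(f ∧ v∞))(df^c ∧ v₀)` and `η^c = Ad(exp(f^c ∧ v₀))(df ∧ v∞)`. -/
def IsChristoffelPair (n : ℕ) (S Sc : IsothermicSurface n) (vinf v0 : MV n)
    (f fc : Surf → MV n) : Prop :=
  vinf ∈ LightCone n ∧ v0 ∈ LightCone n ∧ mink n v0 vinf = -1
  ∧ ContDiff ℝ (⊤ : ℕ∞) f ∧ ContDiff ℝ (⊤ : ℕ∞) fc
  ∧ (∀ x, mink n (f x) v0 = 0) ∧ (∀ x, mink n (f x) vinf = 0)
  ∧ (∀ x, mink n (fc x) v0 = 0) ∧ (∀ x, mink n (fc x) vinf = 0)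
  ∧ (∀ x, S.F x = v0 + f x + (mink n (f x) (f x) / 2) • vinf)
  ∧ (∀ x, Sc.F x = vinf + fc x + (mink n (fc x) (fc x) / 2) • v0)
  ∧ (∀ x z, wedge n (S.F x) (S.W₁ x) z
      = wedge n (pd du fc x + mink n (f x) (pd du fc x) • vinf) (S.F x) z)
  ∧ (∀ x z, wedge n (S.F x) (S.W₂ x) z
      = wedge n (pd dv fc x + mink n (f x) (pd dv fc x) • vinf) (S.F x) z)
  ∧ (∀ x z, wedge n (Sc.F x) (Sc.W₁ x) z
      = wedge n (pd du f x + mink n (fc x) (pd du f x) • v0) (Sc.F x) z)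
  ∧ (∀ x z, wedge n (Sc.F x) (Sc.W₂ x) z
      = wedge n (pd dv f x + mink n (fc x) (pd dv f x) • v0) (Sc.F x) z)

/-- `Φ` is an orthogonal gauge transformation with `Φ · (d + sη) = d`. -/
def IsTGauge (n : ℕ) (S : IsothermicSurface n) (s : ℝ)
    (Φ : Surf → MV n → MV n) : Prop :=
  (∀ x, IsLinearMap ℝ (Φ x))
  ∧ (∀ x z z', mink n (Φ x z) (Φ x z') = mink n z z')
  ∧ (∀ σ : Surf → MV n, ContDiff ℝ (⊤ : ℕ∞) σ → ∀ x,
      (fderiv ℝ (fun y => Φ y (σ y)) x du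
         = Φ x (fderiv ℝ σ x du + s • wedge n (S.F x) (S.W₁ x) (σ x)))
      ∧ (fderiv ℝ (fun y => Φ y (σ y)) x dv
         = Φ x (fderiv ℝ σ x dv + s • wedge n (S.F x) (S.W₂ x) (σ x))))

/-- `(Λ_s, η_s)` is the T-transform of `(Λ,η)` associated to `Φ_s`:
`Λ_s = Φ_s Λ` and `η_s = Ad(Φ_s) η`. -/
def IsTTransform (n : ℕ) (S : IsothermicSurface n) (s : ℝ)
    (Φ : Surf → MV n → MV n) (Ss : IsothermicSurface n) : Prop :=
  IsTGauge n S s Φ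
  ∧ (∀ x, Ss.F x = Φ x (S.F x))
  ∧ (∀ x z, wedge n (Ss.F x) (Ss.W₁ x) (Φ x z) = Φ x (wedge n (S.F x) (S.W₁ x) z))
  ∧ (∀ x z, wedge n (Ss.F x) (Ss.W₂ x) (Φ x z) = Φ x (wedge n (S.F x) (S.W₂ x) z))

/-- orthogonal complement with respect to the Minkowski form -/
def mperp (n : ℕ) (U : Submodule ℝ (MV n)) : Submodule ℝ (MV n) where
  carrier := {v | ∀ u ∈ U, mink n v u = 0}
  add_mem' := by
    intro a b ha hb u hu
    rw [mink_add_left, ha u hu, hb u hu, add_zero]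
  zero_mem' := by
    intro u hu; exact mink_zero_left n u
  smul_mem' := by
    intro r a ha u hu
    rw [mink_smul_left, ha u hu, mul_zero]

/-- the spherical system of `Λ` and a Darboux transform `Λ̂ = ⟨G⟩`: the
`(n−2)`-sphere congruence `C = Λ ⊕ Λ̂ ⊕ V_R^⊥`, `V_R = Λ^{(1)} ⊕ Λ̂`. -/
def sphericalSystem (n : ℕ) (S : IsothermicSurface n) (G : Surf → MV n)
    (x : Surf) : Submodule ℝ (MV n) :=
  Submodule.span ℝ {S.F x, G x}
    ⊔ mperp n (Submodule.span ℝ {S.F x, pd du S.F x, pd dv S.F x, G x})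

/-- the sphere-planes congruence `P = C + ⟨w⟩` of `Λ` and `Λ̂ = ⟨G⟩` with
respect to `w`. -/
def spherePlanes (n : ℕ) (S : IsothermicSurface n) (G : Surf → MV n)
    (w : MV n) (x : Surf) : Submodule ℝ (MV n) :=
  sphericalSystem n S G x ⊔ Submodule.span ℝ {w}
section Aux

variable {n : ℕ}

lemma mink_comm (n : ℕ) (a b : MV n) : mink n a b = mink n b a := by
  unfold mink
  congr 1
  · exact Finset.sum_congr rfl fun i _ => mul_comm _ _
  · exact mul_comm _ _

lemma mink_add_right (n : ℕ) (a b c : MV n) :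
    mink n a (b + c) = mink n a b + mink n a c := by
  rw [mink_comm, mink_add_left, mink_comm n b a, mink_comm n c a]

lemma mink_smul_right (n : ℕ) (r : ℝ) (a c : MV n) :
    mink n a (r • c) = r * mink n a c := by
  rw [mink_comm, mink_smul_left, mink_comm]

lemma mink_zero_right (n : ℕ) (c : MV n) : mink n c 0 = 0 := by
  rw [mink_comm, mink_zero_left]

/-- mink as a linear map in the second argument -/
def minkL (n : ℕ) (a : MV n) : MV n →ₗ[ℝ] ℝ where
  toFun b := mink n a b
  map_add' b c := mink_add_right n a b c
  map_smul' r b := mink_smul_right n r a b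

lemma mink_sum_right (n : ℕ) (a : MV n) {ι : Type*} (s : Finset ι) (f : ι → MV n) :
    mink n a (∑ i ∈ s, f i) = ∑ i ∈ s, mink n a (f i) :=
  map_sum (minkL n a) f s

lemma mink_sub_left (n : ℕ) (a b c : MV n) :
    mink n (a - b) c = mink n a c - mink n b c := by
  have := mink_add_left n a (-b) c
  have h2 := mink_smul_left n (-1) b c
  simp only [neg_one_smul] at h2
  rw [sub_eq_add_neg, this, h2]; ring

lemma mink_sub_right (n : ℕ) (a b c : MV n) :
    mink n a (b - c) = mink n a b - mink n a c := by
  rw [mink_comm, mink_sub_left, mink_comm n b a, mink_comm n c a]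

lemma wedge_apply (n : ℕ) (u v w : MV n) :
    wedge n u v w = mink n u w • v - mink n v w • u := rfl

lemma wedge_zero_right (n : ℕ) (u v : MV n) : wedge n u v 0 = 0 := by
  simp [wedge, mink_zero_right]

lemma wedge_add_right (n : ℕ) (u v w w' : MV n) :
    wedge n u v (w + w') = wedge n u v w + wedge n u v w' := by
  simp only [wedge, mink_add_right, add_smul]; abel

lemma wedge_smul_right (n : ℕ) (u v : MV n) (r : ℝ) (w : MV n) :
    wedge n u v (r • w) = r • wedge n u v w := by
  simp only [wedge, mink_smul_right, mul_smul, smul_sub]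

/-- wedge as a linear map in the third argument -/
def wedgeL (n : ℕ) (u v : MV n) : MV n →ₗ[ℝ] MV n where
  toFun w := wedge n u v w
  map_add' w w' := wedge_add_right n u v w w'
  map_smul' r w := wedge_smul_right n u v r w

lemma wedge_sum_right (n : ℕ) (u v : MV n) {ι : Type*} (s : Finset ι) (f : ι → MV n) :
    wedge n u v (∑ i ∈ s, f i) = ∑ i ∈ s, wedge n u v (f i) :=
  map_sum (wedgeL n u v) f s

lemma wedge_smul_self (n : ℕ) (u : MV n) (r : ℝ) (z : MV n) :
    wedge n u (r • u) z = 0 := by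
  rw [wedge_apply, mink_smul_left, smul_smul, mul_comm (mink n u z) r, sub_self]

end Aux
section Aux2

variable {n : ℕ}

lemma contDiff_coord (n : ℕ) (i : Fin (n + 2)) :
    ContDiff ℝ (⊤ : ℕ∞) (fun v : MV n => v i) :=
  (EuclideanSpace.proj (𝕜 := ℝ) i).contDiff

lemma ContDiff.mink' {E : Type*} [NormedAddCommGroup E] [NormedSpace ℝ E]
    {f g : E → MV n} (hf : ContDiff ℝ (⊤ : ℕ∞) f) (hg : ContDiff ℝ (⊤ : ℕ∞) g) :
    ContDiff ℝ (⊤ : ℕ∞) (fun x => mink n (f x) (g x)) := by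
  unfold mink
  apply ContDiff.sub
  · apply ContDiff.sum
    intro i _
    exact (((contDiff_coord n i.castSucc).comp hf)).mul ((contDiff_coord n i.castSucc).comp hg)
  · exact (((contDiff_coord n (Fin.last (n+1))).comp hf)).mul
      ((contDiff_coord n (Fin.last (n+1))).comp hg)

lemma Continuous.mink' {E : Type*} [TopologicalSpace E]
    {f g : E → MV n} (hf : Continuous f) (hg : Continuous g) :
    Continuous (fun x => mink n (f x) (g x)) := by
  unfold mink
  apply Continuous.sub
  · apply continuous_finset_sum
    intro i _
    exact (((EuclideanSpace.proj (𝕜 := ℝ) i.castSucc).continuous.comp hf)).mul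
      ((EuclideanSpace.proj (𝕜 := ℝ) i.castSucc).continuous.comp hg)
  · exact (((EuclideanSpace.proj (𝕜 := ℝ) (Fin.last (n+1))).continuous.comp hf)).mul
      ((EuclideanSpace.proj (𝕜 := ℝ) (Fin.last (n+1))).continuous.comp hg)

/-- a nonzero null vector has nonzero last coordinate -/
lemma null_last_ne (n : ℕ) (v : MV n) (hv : v ≠ 0) (hnull : mink n v v = 0) :
    v (Fin.last (n + 1)) ≠ 0 := by
  intro h
  apply hv
  have hs : ∑ i : Fin (n + 1), v i.castSucc * v i.castSucc = 0 := by
    have := hnull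
    unfold mink at this
    rw [h] at this
    linarith [this]
  have hper : ∀ i : Fin (n+1), v i.castSucc = 0 := by
    intro i
    have h0 : ∀ i ∈ (Finset.univ : Finset (Fin (n+1))), 0 ≤ v i.castSucc * v i.castSucc :=
      fun i _ => mul_self_nonneg _
    have := (Finset.sum_eq_zero_iff_of_nonneg h0).1 hs i (Finset.mem_univ i)
    exact mul_self_eq_zero.mp this
  refine PiLp.ext fun j => ?_
  rcases Fin.eq_castSucc_or_eq_last j with ⟨i, rfl⟩ | rfl
  · exact hper i
  · exact h

/-- two nonzero null vectors spanning different lines have nonzero inner product -/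
lemma mink_ne_zero_of_null (n : ℕ) (F G : MV n) (hF : F ≠ 0) (hG : G ≠ 0)
    (hFn : mink n F F = 0) (hGn : mink n G G = 0)
    (hsp : G ∉ Submodule.span ℝ {F}) : mink n F G ≠ 0 := by
  intro he
  apply hsp
  have hFl := null_last_ne n F hF hFn
  set r : ℝ := G (Fin.last (n+1)) / F (Fin.last (n+1)) with hr
  have hGr : G = r • F := by
    set h : MV n := G - r • F with hh
    have hlast : h (Fin.last (n+1)) = 0 := by
      simp only [hh, PiLp.sub_apply, PiLp.smul_apply, smul_eq_mul, hr]
      field_simp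
      simp
    have hnull : mink n h h = 0 := by
      rw [hh, mink_sub_left, mink_sub_right, mink_sub_right,
        mink_smul_left, mink_smul_right, mink_smul_left, mink_smul_right,
        mink_comm n G F] at *
      rw [hFn, hGn, he]
      ring
    have hz : h = 0 := by
      by_contra hne
      exact null_last_ne n h hne hnull hlast
    have : G - r • F = 0 := hz
    rw [sub_eq_zero] at this
    exact this
  rw [hGr]
  exact Submodule.smul_mem _ r (Submodule.mem_span_singleton_self F)

end Aux2
section Aux3

variable {n : ℕ}

open Polynomial in
lemma coeffs_zero {N : ℕ} (v : ℕ → MV n)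
    (h : ∀ t : ℝ, ∑ k ∈ Finset.range N, t ^ k • v k = 0) :
    ∀ k, k < N → v k = 0 := by
  intro k hk
  refine PiLp.ext fun i => ?_
  set P : ℝ[X] := ∑ j ∈ Finset.range N, C (v j i) * X ^ j with hP
  have heval : ∀ t : ℝ, P.eval t = 0 := by
    intro t
    have h1 := congrArg (fun w : MV n => w i) (h t)
    simp only [PiLp.zero_apply] at h1
    have h2 : (∑ k ∈ Finset.range N, t ^ k • v k) i
        = ∑ j ∈ Finset.range N, t ^ j * v j i := by
      have h3 := map_sum (EuclideanSpace.proj (𝕜 := ℝ) i)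
        (fun k => t ^ k • v k) (Finset.range N)
      simp only [EuclideanSpace.proj, PiLp.proj_apply, PiLp.smul_apply,
        smul_eq_mul] at h3
      exact h3
    rw [h2] at h1
    simp only [hP, eval_finset_sum, eval_mul, eval_C, eval_pow, eval_X]
    rw [← h1]
    exact Finset.sum_congr rfl fun j _ => mul_comm _ _
  have hP0 : P = 0 := by
    apply Polynomial.funext
    intro r; rw [heval r]; simp
  have hc : P.coeff k = v k i := by
    simp only [hP, finset_sum_coeff, coeff_C_mul, coeff_X_pow]
    rw [Finset.sum_congr rfl (fun j _ => by rw [mul_ite, mul_one, mul_zero])]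
    rw [Finset.sum_ite_eq (Finset.range N) k (fun j => v j i)]
    simp [hk]
  rw [hP0] at hc
  simpa using hc.symm

/-- extracting coefficients from `∑ tᵏ aₖ + ∑ tᵏ⁺¹ bₖ = 0`. -/
lemma twin_coeffs {N : ℕ} (a b : ℕ → MV n)
    (h : ∀ t : ℝ, (∑ k ∈ Finset.range N, t ^ k • a k)
        + (∑ k ∈ Finset.range N, t ^ (k + 1) • b k) = 0) :
    (∀ k, k + 1 < N → a (k + 1) + b k = 0) ∧ (0 < N → b (N - 1) = 0) := by
  set v : ℕ → MV n := fun k =>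
    (if k < N then a k else 0) + (if k = 0 then 0 else b (k - 1)) with hv
  have hz : ∀ k, k < N + 1 → v k = 0 := by
    apply coeffs_zero
    intro t
    have e1 : ∑ k ∈ Finset.range (N + 1), t ^ k • (if k < N then a k else 0)
        = ∑ k ∈ Finset.range N, t ^ k • a k := by
      rw [Finset.sum_range_succ, if_neg (lt_irrefl N)]
      simp only [smul_zero, add_zero]
      exact Finset.sum_congr rfl fun k hk => by
        rw [if_pos (Finset.mem_range.mp hk)]
    have e2 : ∑ k ∈ Finset.range (N + 1), t ^ k • (if k = 0 then 0 else b (k - 1))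
        = ∑ k ∈ Finset.range N, t ^ (k + 1) • b k := by
      rw [Finset.sum_range_succ']
      have h0 : (if (0:ℕ) = 0 then (0:MV n) else b (0 - 1)) = 0 := if_pos rfl
      rw [h0, smul_zero, add_zero]
      exact Finset.sum_congr rfl fun k _ => by
        rw [if_neg (Nat.succ_ne_zero k), Nat.add_sub_cancel]
    calc ∑ k ∈ Finset.range (N + 1), t ^ k • v k
        = ∑ k ∈ Finset.range (N + 1), (t ^ k • (if k < N then a k else 0)
            + t ^ k • (if k = 0 then 0 else b (k - 1))) := by
          exact Finset.sum_congr rfl fun k _ => by rw [hv]; rw [smul_add]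
      _ = _ := by rw [Finset.sum_add_distrib, e1, e2]; exact h t
  constructor
  · intro k hk
    have := hz (k + 1) (by omega)
    rw [hv] at this
    simpa [if_pos hk, Nat.succ_ne_zero] using this
  · intro hN
    have := hz N (by omega)
    rw [hv] at this
    rcases Nat.eq_zero_or_pos N with h0 | h0
    · omega
    · simpa [lt_irrefl, Nat.pos_iff_ne_zero.mp h0] using this

/-- a continuous function vanishing away from a point vanishes everywhere -/
lemma zero_of_ne_of_continuous {V : Type*} [NormedAddCommGroup V]
    {f : ℝ → V} (hf : Continuous f) (m : ℝ) (h : ∀ t, t ≠ m → f t = 0) :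
    ∀ t, f t = 0 := by
  intro t
  rcases eq_or_ne t m with rfl | hne
  · have h1 : Filter.Tendsto f (nhdsWithin t {t}ᶜ) (nhds (f t)) :=
      (hf.tendsto t).mono_left nhdsWithin_le_nhds
    have h2 : Filter.Tendsto f (nhdsWithin t {t}ᶜ) (nhds 0) := by
      apply Filter.Tendsto.congr' _ tendsto_const_nhds
      filter_upwards [self_mem_nhdsWithin] with s hs
      exact (h s hs).symm
    exact tendsto_nhds_unique h1 h2
  · exact h t hne

end Aux3
section Aux4

variable {n : ℕ}

lemma gauge_eq (n : ℕ) (F G : MV n) (c : ℝ) (z : MV n) :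
    gaugeG n F G c z = z + ((mink n G z / mink n F G) * (1 / c - 1)) • F
      + ((mink n F z / mink n F G) * (c - 1)) • G := by
  unfold gaugeG
  module

lemma gaugeG_zero (n : ℕ) (F G : MV n) (c : ℝ) : gaugeG n F G c 0 = 0 := by
  rw [gauge_eq, mink_zero_right, mink_zero_right]
  simp

lemma gauge_mink (n : ℕ) (F G : MV n) (c : ℝ) (hc : c ≠ 0)
    (hF : mink n F F = 0) (hG : mink n G G = 0) (he : mink n F G ≠ 0)
    (z z' : MV n) :
    mink n (gaugeG n F G c z) (gaugeG n F G c z') = mink n z z' := by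
  rw [gauge_eq, gauge_eq]
  simp only [mink_add_left, mink_add_right, mink_smul_left, mink_smul_right]
  rw [mink_comm n G F, mink_comm n z F, mink_comm n z G, hF, hG]
  field_simp
  ring

end Aux4
section Aux5

lemma sum_delta (d : ℕ) (m t : ℝ) (α : ℕ → ℝ) :
    (m - t) * (∑ k ∈ Finset.range d, t ^ (k + 1)
        * ∑ j ∈ Finset.Icc (k + 1) d, α j * m ^ (j - k - 1))
      = t * ((∑ j ∈ Finset.range (d + 1), α j * m ^ j)
          - (∑ j ∈ Finset.range (d + 1), α j * t ^ j)) := by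
  have step1 : (∑ k ∈ Finset.range d, t ^ (k + 1)
        * ∑ j ∈ Finset.Icc (k + 1) d, α j * m ^ (j - k - 1))
      = ∑ k ∈ Finset.Ico 0 (d + 1), ∑ j ∈ Finset.Ico (k + 1) (d + 1),
          t ^ (k + 1) * (α j * m ^ (j - k - 1)) := by
    rw [← Finset.range_eq_Ico, Finset.sum_range_succ]
    rw [show Finset.Ico (d + 1) (d + 1) = ∅ from Finset.Ico_self _]
    rw [Finset.sum_empty, add_zero]
    exact Finset.sum_congr rfl fun k _ => by
      rw [Finset.mul_sum, Finset.Ico_add_one_right_eq_Icc]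
  have step2 : ∀ j : ℕ, (∑ k ∈ Finset.Ico 0 j, t ^ (k + 1) * (α j * m ^ (j - k - 1)))
      = α j * (t * ∑ k ∈ Finset.range j, t ^ k * m ^ (j - 1 - k)) := by
    intro j
    rw [← Finset.range_eq_Ico, Finset.mul_sum, Finset.mul_sum]
    exact Finset.sum_congr rfl fun k _ => by
      have hsub : j - k - 1 = j - 1 - k := by omega
      rw [hsub]; ring
  have geom : ∀ j : ℕ, (m - t) * ∑ k ∈ Finset.range j, t ^ k * m ^ (j - 1 - k)
      = m ^ j - t ^ j := by
    intro j
    have := geom_sum₂_mul t m j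
    nlinarith [this]
  rw [step1, sum_Ico_Ico_comm' 0 (d + 1)]
  rw [Finset.mul_sum]
  rw [Finset.sum_congr rfl fun j _ => by
    rw [step2 j, show (m - t) * (α j * (t * ∑ k ∈ Finset.range j, t ^ k * m ^ (j - 1 - k)))
        = α j * t * ((m - t) * ∑ k ∈ Finset.range j, t ^ k * m ^ (j - 1 - k)) from by ring,
      geom j]]
  rw [← Finset.range_eq_Ico]
  rw [mul_sub, Finset.mul_sum, Finset.mul_sum, ← Finset.sum_sub_distrib]
  exact Finset.sum_congr rfl fun j _ => by ring

end Aux5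
section Aux6

/-- the coefficients of the gauged polynomial conserved quantity -/
def phCoeff (n : ℕ) (S : IsothermicSurface n) (d : ℕ)
    (p : PolyConservedQuantity n S d) (m : ℝ) (G : Surf → MV n) :
    ℕ → Surf → MV n
  | 0 => p.coeff 0
  | (k + 1) => fun x =>
      p.coeff (k + 1) x
        - ((∑ j ∈ Finset.Icc (k + 1) d,
              mink n (G x) (p.coeff j x) * m ^ (j - k - 1))
            / mink n (S.F x) (G x)) • S.F x
        - (mink n (S.F x) (p.coeff k x) / (m * mink n (S.F x) (G x))) • G x

lemma star_eq (n d : ℕ) (S : IsothermicSurface n) (p : PolyConservedQuantity n S d)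
    (m : ℝ) (hm : m ≠ 0) (G : Surf → MV n)
    (he : ∀ x, mink n (S.F x) (G x) ≠ 0)
    (hαm : ∀ x, ∑ j ∈ Finset.range (d + 1),
        m ^ j * mink n (G x) (p.coeff j x) = 0)
    (hβd : ∀ x, mink n (S.F x) (p.coeff d x) = 0)
    (t : ℝ) (ht : t ≠ m) (x : Surf) :
    ∑ k ∈ Finset.range (d + 1), t ^ k • phCoeff n S d p m G k x
      = gaugeG n (S.F x) (G x) (1 - t / m) (pcEval p t x) := by
  set F := S.F with hF
  set e : ℝ := mink n (F x) (G x) with he'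
  set α : ℕ → ℝ := fun j => mink n (G x) (p.coeff j x) with hα
  set β : ℕ → ℝ := fun j => mink n (F x) (p.coeff j x) with hβ
  set δ : ℕ → ℝ := fun k => ∑ j ∈ Finset.Icc (k + 1) d, α j * m ^ (j - k - 1) with hδ
  -- expand the left side
  have hsplit : ∑ k ∈ Finset.range (d + 1), t ^ k • phCoeff n S d p m G k x
      = pcEval p t x
        - ((∑ k ∈ Finset.range d, t ^ (k + 1) * δ k) / e) • F x
        - ((∑ k ∈ Finset.range d, t ^ (k + 1) * β k) / (m * e)) • G x := by
    rw [Finset.sum_range_succ']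
    have hterm : ∀ k, t ^ (k + 1) • phCoeff n S d p m G (k + 1) x
        = t ^ (k + 1) • p.coeff (k + 1) x
          - ((t ^ (k + 1) * δ k) / e) • F x
          - ((t ^ (k + 1) * β k) / (m * e)) • G x := by
      intro k
      show t ^ (k + 1) • (p.coeff (k + 1) x - _ - _) = _
      rw [smul_sub, smul_sub, smul_smul, smul_smul]
      rw [mul_div_assoc, mul_div_assoc]
    rw [Finset.sum_congr rfl fun k _ => hterm k]
    rw [Finset.sum_sub_distrib, Finset.sum_sub_distrib]
    rw [← Finset.sum_smul, ← Finset.sum_smul, ← Finset.sum_div, ← Finset.sum_div]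
    have hP : (∑ k ∈ Finset.range d, t ^ (k + 1) • p.coeff (k + 1) x)
        + t ^ 0 • p.coeff 0 x = pcEval p t x := by
      rw [pcEval, Finset.sum_range_succ']
    show _ = _
    rw [← hP]
    abel
  rw [hsplit, gauge_eq]
  have hminkG : mink n (G x) (pcEval p t x) = ∑ j ∈ Finset.range (d + 1), t ^ j * α j := by
    rw [pcEval, mink_sum_right]
    exact Finset.sum_congr rfl fun j _ => mink_smul_right n _ _ _
  have hminkF : mink n (F x) (pcEval p t x) = ∑ j ∈ Finset.range (d + 1), t ^ j * β j := by
    rw [pcEval, mink_sum_right]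
    exact Finset.sum_congr rfl fun j _ => mink_smul_right n _ _ _
  rw [hminkG, hminkF]
  have hmt : m - t ≠ 0 := sub_ne_zero.mpr (Ne.symm ht)
  -- the two scalar identities
  have hAid : (∑ k ∈ Finset.range d, t ^ (k + 1) * δ k) / e
      = -(((∑ j ∈ Finset.range (d + 1), t ^ j * α j) / e) * (1 / (1 - t / m) - 1)) := by
    have hsd : (m - t) * ∑ k ∈ Finset.range d, t ^ (k + 1) * δ k
        = t * ((0:ℝ) - ∑ j ∈ Finset.range (d + 1), α j * t ^ j) := by
      have h := sum_delta d m t α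
      have h0 : ∑ j ∈ Finset.range (d + 1), α j * m ^ j = 0 := by
        rw [← hαm x]
        exact Finset.sum_congr rfl fun j _ => mul_comm _ _
      rw [h0] at h
      exact h
    have hswap : ∑ j ∈ Finset.range (d + 1), t ^ j * α j
        = ∑ j ∈ Finset.range (d + 1), α j * t ^ j :=
      Finset.sum_congr rfl fun j _ => mul_comm _ _
    rw [hswap]
    have hc1 : (1:ℝ) / (1 - t / m) - 1 = t / (m - t) := by
      rw [show (1:ℝ) - t / m = (m - t) / m from by field_simp]
      rw [one_div_div, div_sub_one hmt]
      rw [show m - (m - t) = t from by ring]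
    rw [hc1]
    have hX : (∑ k ∈ Finset.range d, t ^ (k + 1) * δ k)
        = t * ((0:ℝ) - ∑ j ∈ Finset.range (d + 1), α j * t ^ j) / (m - t) := by
      rw [← hsd, mul_comm, mul_div_assoc, div_self hmt, mul_one]
    rw [hX]
    field_simp
    ring
  have hBid : (∑ k ∈ Finset.range d, t ^ (k + 1) * β k) / (m * e)
      = -(((∑ j ∈ Finset.range (d + 1), t ^ j * β j) / e) * ((1 - t / m) - 1)) := by
    have hβtop : ∑ j ∈ Finset.range (d + 1), t ^ j * β j
        = ∑ j ∈ Finset.range d, t ^ j * β j := by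
      rw [Finset.sum_range_succ]
      rw [show β d = 0 from hβd x, mul_zero, add_zero]
    rw [hβtop]
    have hshift : ∑ k ∈ Finset.range d, t ^ (k + 1) * β k
        = t * ∑ k ∈ Finset.range d, t ^ k * β k := by
      rw [Finset.mul_sum]
      exact Finset.sum_congr rfl fun k _ => by ring
    rw [hshift]
    field_simp
    ring
  rw [hAid, hBid]
  module

end Aux6
/-- Corollary: a complementary surface of a special isothermic surface of type
`d` is special isothermic of type `d`, with `p̂(0) = p(0)` and
`(p̂(t),p̂(t)) = (p(t),p(t))`. -/
theorem complementary_surface_special (n d : ℕ) (hd : 1 ≤ d)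
    (S : IsothermicSurface n) (p : PolyConservedQuantity n S d)
    (m : ℝ) (hm : m ≠ 0) (D : DarbouxTransform n S m)
    (hcomp : IsComplementary n p D) (T : IsothermicSurface n)
    (hT : T.F = D.G) (hg : GaugeRel n S T m) :
    ∃ ph : PolyConservedQuantity n T d,
      (∀ x, ph.coeff 0 x = p.coeff 0 x)
      ∧ ∀ t x, mink n (pcEval ph t x) (pcEval ph t x)
          = mink n (pcEval p t x) (pcEval p t x) := by
  -- basic facts about `G = T.F`
  have hGne : ∀ x, T.F x ≠ 0 := by rw [hT]; exact D.G_ne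
  have hGnull : ∀ x, mink n (T.F x) (T.F x) = 0 := by rw [hT]; exact D.G_null
  have hGsm : ContDiff ℝ (⊤ : ℕ∞) T.F := by rw [hT]; exact D.smooth_G
  have hGpar : ParallelSection n S m T.F := by rw [hT]; exact D.parallel
  have hGimm : ∀ x, LinearIndependent ℝ ![T.F x, pd du T.F x, pd dv T.F x] := by
    rw [hT]; exact D.immersed
  have hGdisj : ∀ x, T.F x ∉ Submodule.span ℝ {S.F x} := by rw [hT]; exact D.disjoint
  have hGspan : ∀ x, Submodule.span ℝ {T.F x} = Submodule.span ℝ {pcEval p m x} := by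
    rw [hT]; exact hcomp.2
  -- the pairing (F,G) is nowhere zero
  have he : ∀ x, mink n (S.F x) (T.F x) ≠ 0 := fun x =>
    mink_ne_zero_of_null n (S.F x) (T.F x) (S.F_ne x) (hGne x) (S.F_null x)
      (hGnull x) (hGdisj x)
  -- (G, p(m)) = 0
  have hαm : ∀ x, ∑ j ∈ Finset.range (d + 1),
      m ^ j * mink n (T.F x) (p.coeff j x) = 0 := by
    intro x
    have hmem : T.F x ∈ Submodule.span ℝ {pcEval p m x} := by
      rw [← hGspan x]; exact Submodule.mem_span_singleton_self _
    obtain ⟨κ, hκ⟩ := Submodule.mem_span_singleton.mp hmem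
    have h0 : mink n (T.F x) (pcEval p m x) = 0 := by
      rw [← hκ, mink_smul_left, hcomp.1 x, mul_zero]
    rw [← h0, pcEval, mink_sum_right]
    exact Finset.sum_congr rfl fun j _ => (mink_smul_right n _ _ _).symm
  -- derivative of a polynomial of sections
  have hder : ∀ (c : ℕ → Surf → MV n), (∀ k, ContDiff ℝ (⊤ : ℕ∞) (c k)) →
      ∀ (t : ℝ) (x : Surf) (w : Surf),
      fderiv ℝ (fun y => ∑ k ∈ Finset.range (d + 1), t ^ k • c k y) x w
        = ∑ k ∈ Finset.range (d + 1), t ^ k • fderiv ℝ (c k) x w := by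
    intro c hc t x w
    have hdiff : ∀ k ∈ Finset.range (d + 1),
        DifferentiableAt ℝ (fun y => t ^ k • c k y) x :=
      fun k _ => (((hc k).differentiable (by simp)) x).const_smul (t ^ k)
    rw [fderiv_fun_sum hdiff, ContinuousLinearMap.sum_apply]
    exact Finset.sum_congr rfl fun k _ => by
      rw [fderiv_fun_const_smul (((hc k).differentiable (by simp)) x) (t ^ k)]
      rfl
  -- coefficient extraction from the conserved-quantity equation
  have hcoeff : ∀ (w : Surf) (W : Surf → MV n),
      (∀ (t : ℝ) (x : Surf),
        fderiv ℝ (fun y => ∑ k ∈ Finset.range (d + 1), t ^ k • p.coeff k y) x w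
          + t • wedge n (S.F x) (W x)
              (∑ k ∈ Finset.range (d + 1), t ^ k • p.coeff k x) = 0) →
      ∀ x : Surf,
        (∀ k, k + 1 < d + 1 →
          fderiv ℝ (p.coeff (k + 1)) x w + wedge n (S.F x) (W x) (p.coeff k x) = 0)
        ∧ wedge n (S.F x) (W x) (p.coeff d x) = 0 := by
    intro w W hcons x
    have htw := twin_coeffs (N := d + 1) (fun k => fderiv ℝ (p.coeff k) x w)
      (fun k => wedge n (S.F x) (W x) (p.coeff k x)) ?_
    · refine ⟨htw.1, ?_⟩
      have := htw.2 (by omega)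
      simpa using this
    · intro t
      have h1 := hcons t x
      rw [hder p.coeff p.smooth t x w] at h1
      have h2 : t • wedge n (S.F x) (W x)
          (∑ k ∈ Finset.range (d + 1), t ^ k • p.coeff k x)
          = ∑ k ∈ Finset.range (d + 1), t ^ (k + 1)
              • wedge n (S.F x) (W x) (p.coeff k x) := by
        rw [wedge_sum_right, Finset.smul_sum]
        exact Finset.sum_congr rfl fun k _ => by
          rw [wedge_smul_right, smul_smul, ← pow_succ']
      rw [h2] at h1
      exact h1
  have hcoeffdu := hcoeff du S.W₁ (fun t x => (p.conserved t x).1)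
  -- (F, p_d) = 0
  have hβd : ∀ x, mink n (S.F x) (p.coeff d x) = 0 := by
    intro x
    by_contra hφ
    have hw := (hcoeffdu x).2
    rw [wedge_apply, sub_eq_zero] at hw
    -- W₁ x is a multiple of F x
    have hW : ∃ r : ℝ, S.W₁ x = r • S.F x := by
      refine ⟨(mink n (S.F x) (p.coeff d x))⁻¹ * mink n (S.W₁ x) (p.coeff d x), ?_⟩
      have h := congrArg (fun z => (mink n (S.F x) (p.coeff d x))⁻¹ • z) hw
      simp only [smul_smul] at h
      rw [inv_mul_cancel₀ hφ, one_smul] at h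
      exact h
    obtain ⟨r, hWr⟩ := hW
    have hwedge0 : wedge n (S.F x) (S.W₁ x) (T.F x) = 0 := by
      rw [hWr]; exact wedge_smul_self n _ _ _
    have hpar := (hGpar x).1
    rw [hwedge0, smul_zero, add_zero] at hpar
    have hli := hGimm x
    have := hli.ne_zero 1
    apply this
    show pd du T.F x = 0
    rw [pd, hpar]
  -- smoothness of the new coefficients
  have hsm : ∀ k, ContDiff ℝ (⊤ : ℕ∞) (phCoeff n S d p m T.F k) := by
    intro k
    cases k with
    | zero => exact p.smooth 0
    | succ k =>
      refine ContDiff.sub (ContDiff.sub (p.smooth (k + 1)) ?_) ?_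
      · exact (ContDiff.div
          (ContDiff.sum fun j _ => (hGsm.mink' (p.smooth j)).mul contDiff_const)
          (S.smooth_F.mink' hGsm) he).smul S.smooth_F
      · exact (ContDiff.div (S.smooth_F.mink' (p.smooth k))
          (contDiff_const.mul (S.smooth_F.mink' hGsm))
          (fun x => mul_ne_zero hm (he x))).smul hGsm
  -- vanishing of the new coefficients above degree d
  have hzero : ∀ k, d < k → phCoeff n S d p m T.F k = 0 := by
    intro k hk
    cases k with
    | zero => omega
    | succ k =>
      funext x
      have h1 : p.coeff (k + 1) = 0 := p.coeff_eq_zero _ hk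
      have h2 : Finset.Icc (k + 1) d = ∅ := Finset.Icc_eq_empty (by omega)
      have h3 : mink n (S.F x) (p.coeff k x) = 0 := by
        rcases (show k = d ∨ d < k by omega) with rfl | hkd
        · exact hβd x
        · rw [p.coeff_eq_zero k hkd]
          exact mink_zero_right n _
      show p.coeff (k + 1) x - _ - _ = _
      rw [h1, h2, h3]
      simp
  -- the gauge identity
  have hstar : ∀ (s : ℝ), s ≠ m → ∀ y : Surf,
      ∑ k ∈ Finset.range (d + 1), s ^ k • phCoeff n S d p m T.F k y
        = gaugeG n (S.F y) (T.F y) (1 - s / m) (pcEval p s y) :=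
    fun s hs y => star_eq n d S p m hm T.F he hαm hβd s hs y
  -- the new coefficients give a conserved quantity
  have hconsv : ∀ (w : Surf) (WS WT : Surf → MV n),
      (∀ (t : ℝ) (x : Surf),
        fderiv ℝ (fun y => ∑ k ∈ Finset.range (d + 1), t ^ k • p.coeff k y) x w
          + t • wedge n (S.F x) (WS x)
              (∑ k ∈ Finset.range (d + 1), t ^ k • p.coeff k x) = 0) →
      (∀ (s : ℝ), s ≠ m → ∀ σ : Surf → MV n, ContDiff ℝ (⊤ : ℕ∞) σ → ∀ x : Surf,
        fderiv ℝ (fun y => gaugeG n (S.F y) (T.F y) (1 - s / m) (σ y)) x w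
          + s • wedge n (T.F x) (WT x) (gaugeG n (S.F x) (T.F x) (1 - s / m) (σ x))
        = gaugeG n (S.F x) (T.F x) (1 - s / m)
            (fderiv ℝ σ x w + s • wedge n (S.F x) (WS x) (σ x))) →
      ∀ (t : ℝ) (x : Surf),
        fderiv ℝ (fun y => ∑ k ∈ Finset.range (d + 1), t ^ k • phCoeff n S d p m T.F k y) x w
          + t • wedge n (T.F x) (WT x)
              (∑ k ∈ Finset.range (d + 1), t ^ k • phCoeff n S d p m T.F k x) = 0 := by
    intro w WS WT hcons hgw t x
    set Φ : ℝ → MV n := fun s =>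
      (∑ k ∈ Finset.range (d + 1), s ^ k • fderiv ℝ (phCoeff n S d p m T.F k) x w)
        + s • wedge n (T.F x) (WT x)
            (∑ k ∈ Finset.range (d + 1), s ^ k • phCoeff n S d p m T.F k x) with hΦ
    have hcont : Continuous Φ := by
      apply Continuous.add
      · exact continuous_finset_sum _ fun k _ => (continuous_pow k).smul continuous_const
      · apply Continuous.smul continuous_id
        have hgc : Continuous (fun s : ℝ =>
            ∑ k ∈ Finset.range (d + 1), s ^ k • phCoeff n S d p m T.F k x) :=
          continuous_finset_sum _ fun k _ => (continuous_pow k).smul continuous_const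
        show Continuous (fun s : ℝ => wedge n (T.F x) (WT x) _)
        simp only [wedge]
        exact ((Continuous.mink' continuous_const hgc).smul continuous_const).sub
          ((Continuous.mink' continuous_const hgc).smul continuous_const)
    have hzeroΦ : ∀ s, s ≠ m → Φ s = 0 := by
      intro s hs
      have h1 : (fun y => ∑ k ∈ Finset.range (d + 1), s ^ k • phCoeff n S d p m T.F k y)
          = fun y => gaugeG n (S.F y) (T.F y) (1 - s / m) (pcEval p s y) :=
        funext (hstar s hs)
      have hsmoothP : ContDiff ℝ (⊤ : ℕ∞) (fun y => pcEval p s y) := by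
        simp only [pcEval]
        exact ContDiff.sum fun k _ => (p.smooth k).const_smul (s ^ k)
      have h2 := hgw s hs (fun y => pcEval p s y) hsmoothP x
      have h4 : Φ s = fderiv ℝ (fun y =>
          ∑ k ∈ Finset.range (d + 1), s ^ k • phCoeff n S d p m T.F k y) x w
          + s • wedge n (T.F x) (WT x)
              (∑ k ∈ Finset.range (d + 1), s ^ k • phCoeff n S d p m T.F k x) := by
        rw [hΦ, hder _ hsm s x w]
      rw [h4, h1, hstar s hs x]
      have h5 : fderiv ℝ (fun y => pcEval p s y) x w
          + s • wedge n (S.F x) (WS x) (pcEval p s x) = 0 := by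
        simp only [pcEval]
        exact hcons s x
      have h6 : fderiv ℝ (fun y => gaugeG n (S.F y) (T.F y) (1 - s / m) (pcEval p s y)) x w
          + s • wedge n (T.F x) (WT x)
              (gaugeG n (S.F x) (T.F x) (1 - s / m) (pcEval p s x))
          = gaugeG n (S.F x) (T.F x) (1 - s / m)
              (fderiv ℝ (fun y => pcEval p s y) x w
                + s • wedge n (S.F x) (WS x) (pcEval p s x)) := h2
      rw [h6, h5, gaugeG_zero]
    have hfin := zero_of_ne_of_continuous hcont m hzeroΦ t
    rw [hder _ hsm t x w]
    exact hfin
  -- exact degree d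
  have htop : phCoeff n S d p m T.F d ≠ 0 := by
    obtain ⟨d', rfl⟩ : ∃ d', d = d' + 1 := ⟨d - 1, by omega⟩
    intro hcon
    have hβ' : ∀ x, mink n (S.F x) (p.coeff d' x) = 0 := by
      intro x
      have h : mink n (S.F x) (phCoeff n S (d' + 1) p m T.F (d' + 1) x) = 0 := by
        rw [congrFun hcon x]; exact mink_zero_right n _
      have hexp : phCoeff n S (d' + 1) p m T.F (d' + 1) x
          = p.coeff (d' + 1) x
            - ((∑ j ∈ Finset.Icc (d' + 1) (d' + 1),
                  mink n (T.F x) (p.coeff j x) * m ^ (j - d' - 1))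
                / mink n (S.F x) (T.F x)) • S.F x
            - (mink n (S.F x) (p.coeff d' x)
                / (m * mink n (S.F x) (T.F x))) • T.F x := rfl
      rw [hexp, mink_sub_right, mink_sub_right, mink_smul_right, mink_smul_right,
        S.F_null x, hβd x, mul_zero, sub_zero, zero_sub, neg_eq_zero] at h
      rw [div_mul_eq_mul_div, mul_comm m (mink n (S.F x) (T.F x)),
        ← div_div, mul_div_assoc, div_self (he x), mul_one] at h
      exact (div_eq_zero_iff.mp h).resolve_right hm
    set lam : Surf → ℝ := fun x =>
      (∑ j ∈ Finset.Icc (d' + 1) (d' + 1),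
          mink n (T.F x) (p.coeff j x) * m ^ (j - d' - 1))
        / mink n (S.F x) (T.F x) with hlam
    have hpd : p.coeff (d' + 1) = fun x => lam x • S.F x := by
      funext x
      have h : phCoeff n S (d' + 1) p m T.F (d' + 1) x = 0 := congrFun hcon x
      have hexp : phCoeff n S (d' + 1) p m T.F (d' + 1) x
          = p.coeff (d' + 1) x - lam x • S.F x
            - (mink n (S.F x) (p.coeff d' x)
                / (m * mink n (S.F x) (T.F x))) • T.F x := rfl
      rw [hexp, sub_sub, sub_eq_zero] at h
      rw [h, hβ' x, zero_div, zero_smul, add_zero]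
    have hlamsm : ContDiff ℝ (⊤ : ℕ∞) lam :=
      ContDiff.div (ContDiff.sum fun j _ => (hGsm.mink' (p.smooth j)).mul contDiff_const)
        (S.smooth_F.mink' hGsm) he
    obtain ⟨x₀, hx₀⟩ : ∃ x, p.coeff (d' + 1) x ≠ 0 := by
      by_contra hno
      push_neg at hno
      exact p.top_ne (funext hno)
    have hlx : lam x₀ ≠ 0 := by
      intro h0
      exact hx₀ (by rw [congrFun hpd x₀, h0, zero_smul])
    have hord := (hcoeffdu x₀).1 d' (by omega)
    have hwedge : wedge n (S.F x₀) (S.W₁ x₀) (p.coeff d' x₀)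
        = (-(mink n (S.W₁ x₀) (p.coeff d' x₀))) • S.F x₀ := by
      rw [wedge_apply, hβ' x₀, zero_smul, zero_sub, neg_smul]
    have hfd : fderiv ℝ (p.coeff (d' + 1)) x₀ du
        = lam x₀ • fderiv ℝ S.F x₀ du + (fderiv ℝ lam x₀ du) • S.F x₀ := by
      rw [hpd, fderiv_fun_smul (hlamsm.differentiable (by simp) x₀)
        (S.smooth_F.differentiable (by simp) x₀)]
      rw [ContinuousLinearMap.add_apply, ContinuousLinearMap.smulRight_apply,
        ContinuousLinearMap.coe_smul', Pi.smul_apply]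
    rw [hfd, hwedge] at hord
    have h1 : lam x₀ • fderiv ℝ S.F x₀ du
        = (mink n (S.W₁ x₀) (p.coeff d' x₀) - fderiv ℝ lam x₀ du) • S.F x₀ := by
      have h2 := hord
      rw [neg_smul, add_assoc] at h2
      rw [sub_smul]
      have h3 := eq_neg_of_add_eq_zero_left h2
      rw [h3, neg_add, neg_neg]
      abel
    have hFu : pd du S.F x₀
        = ((mink n (S.W₁ x₀) (p.coeff d' x₀) - fderiv ℝ lam x₀ du) / lam x₀)
            • S.F x₀ := by
      have h4 := congrArg (fun z => (lam x₀)⁻¹ • z) h1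
      simp only [smul_smul] at h4
      rw [inv_mul_cancel₀ hlx, one_smul] at h4
      rw [pd, h4, div_eq_inv_mul]
    have hli := S.immersed x₀
    rw [Fintype.linearIndependent_iff] at hli
    have hcontra := hli
      ![(mink n (S.W₁ x₀) (p.coeff d' x₀) - fderiv ℝ lam x₀ du) / lam x₀, -1, 0] ?_ 1
    · norm_num at hcontra
    · rw [Fin.sum_univ_three]
      simp only [Matrix.cons_val_zero, Matrix.cons_val_one, Matrix.head_cons,
        Matrix.cons_val_two, Matrix.tail_cons]
      rw [hFu]
      module
  refine ⟨⟨phCoeff n S d p m T.F, hsm, hzero, htop, ?_⟩, fun x => rfl, ?_⟩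
  · intro t x
    exact ⟨hconsv du S.W₁ T.W₁ (fun t x => (p.conserved t x).1)
        (fun s hs σ hσ x => (hg s hs σ hσ x).1) t x,
      hconsv dv S.W₂ T.W₂ (fun t x => (p.conserved t x).2)
        (fun s hs σ hσ x => (hg s hs σ hσ x).2) t x⟩
  · intro t x
    have hc1 : Continuous (fun s : ℝ =>
        ∑ k ∈ Finset.range (d + 1), s ^ k • phCoeff n S d p m T.F k x) :=
      continuous_finset_sum _ fun k _ => (continuous_pow k).smul continuous_const
    have hc2 : Continuous (fun s : ℝ => pcEval p s x) := by
      simp only [pcEval]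
      exact continuous_finset_sum _ fun k _ => (continuous_pow k).smul continuous_const
    have hcf : Continuous (fun s : ℝ =>
        mink n (∑ k ∈ Finset.range (d + 1), s ^ k • phCoeff n S d p m T.F k x)
            (∑ k ∈ Finset.range (d + 1), s ^ k • phCoeff n S d p m T.F k x)
          - mink n (pcEval p s x) (pcEval p s x)) :=
      (Continuous.mink' hc1 hc1).sub (Continuous.mink' hc2 hc2)
    have hz : ∀ s : ℝ, s ≠ m →
        mink n (∑ k ∈ Finset.range (d + 1), s ^ k • phCoeff n S d p m T.F k x)
            (∑ k ∈ Finset.range (d + 1), s ^ k • phCoeff n S d p m T.F k x)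
          - mink n (pcEval p s x) (pcEval p s x) = 0 := by
      intro s hs
      have hcne : (1 : ℝ) - s / m ≠ 0 := by
        rw [show (1 : ℝ) - s / m = (m - s) / m from by field_simp]
        exact div_ne_zero (sub_ne_zero.mpr (Ne.symm hs)) hm
      rw [hstar s hs x, gauge_mink n (S.F x) (T.F x) _ hcne (S.F_null x)
        (hGnull x) (he x), sub_self]
    have hfin := zero_of_ne_of_continuous hcf m hz t
    exact sub_eq_zero.mp hfin
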